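/- Let λ, σ > 0 and let ψ₀ : ℝ² → ℂ be the Gabor filter ψ₀(u,v) = exp(2πiu/λ)·exp(−(u²+v²)/(2σ²)). Then the real and imaginary parts of ψ₀ satisfy: (i) ⟨Re ψ₀, Im ψ₀⟩_{L²(ℝ²;ℝ)} = 0; (ii) ‖Re ψ₀‖²_{L²} = (πσ²/2)·(1 + exp(−4π²σ²/λ²)); (iii) ‖Im ψ₀‖²_{L²} = (πσ²/2)·(1 − exp(−4π²σ²/λ²)); in particular ‖Re ψ₀‖² + ‖Im ψ₀‖² = πσ². -/

import Mathlib

open MeasureTheory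

section GaborAux

lemma gabor_fourier_gauss (a t : ℝ) (ha : 0 < a) :
    (∫ x : ℝ, Complex.exp (Complex.I * (t:ℂ) * (x:ℂ)) * Complex.exp (-(a:ℂ) * (x:ℂ) ^ 2)) =
      ((Real.sqrt (Real.pi / a) * Real.exp (-t ^ 2 / (4 * a)) : ℝ) : ℂ) := by
  rw [fourierIntegral_gaussian (by simpa using ha) (t : ℂ)]
  rw [show ((1:ℂ)/2) = ((1/2 : ℝ) : ℂ) by norm_num,
    show ((Real.pi : ℂ) / (a:ℂ)) = ((Real.pi / a : ℝ) : ℂ) by push_cast; ring,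
    ← Complex.ofReal_cpow (by positivity) (1/2),
    show (-(t:ℂ) ^ 2 / (4 * (a:ℂ))) = ((-t^2/(4*a) : ℝ) : ℂ) by push_cast; ring,
    ← Complex.ofReal_exp, ← Complex.ofReal_mul, Real.sqrt_eq_rpow]

lemma gabor_integrable_fg (a t : ℝ) (ha : 0 < a) :
    Integrable fun x : ℝ ↦
      Complex.exp (Complex.I * (t:ℂ) * (x:ℂ)) * Complex.exp (-(a:ℂ) * (x:ℂ) ^ 2) := by
  have h := integrable_cexp_quadratic (b := (a:ℂ)) (by simpa using ha) (Complex.I * t) 0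
  apply h.congr
  filter_upwards with x
  rw [← Complex.exp_add]
  congr 1
  ring

lemma gabor_cos_gauss (a t : ℝ) (ha : 0 < a) :
    (∫ x : ℝ, Real.cos (t * x) * Real.exp (-a * x ^ 2)) =
      Real.sqrt (Real.pi / a) * Real.exp (-t ^ 2 / (4 * a)) := by
  have h := gabor_integrable_fg a t ha
  have h2 := integral_re h
  simp only [RCLike.re_to_complex] at h2
  have key : (∫ x : ℝ, Real.cos (t * x) * Real.exp (-a * x ^ 2)) =
      (∫ x : ℝ, Complex.exp (Complex.I * (t:ℂ) * (x:ℂ)) * Complex.exp (-(a:ℂ) * (x:ℂ) ^ 2)).re := by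
    rw [← h2]
    congr 1; ext x
    rw [show (Complex.I * (t:ℂ) * (x:ℂ)) = ((t*x : ℝ):ℂ) * Complex.I by push_cast; ring,
      show (-(a:ℂ) * (x:ℂ)^2) = ((-a*x^2 : ℝ):ℂ) by push_cast; ring, ← Complex.ofReal_exp]
    simp only [Complex.mul_re, Complex.exp_ofReal_mul_I_re, Complex.exp_ofReal_mul_I_im,
      Complex.ofReal_re, Complex.ofReal_im, mul_zero, sub_zero]
  rw [key, gabor_fourier_gauss a t ha, Complex.ofReal_re]

lemma gabor_sin_gauss (a t : ℝ) (ha : 0 < a) :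
    (∫ x : ℝ, Real.sin (t * x) * Real.exp (-a * x ^ 2)) = 0 := by
  have h := gabor_integrable_fg a t ha
  have h2 := integral_im h
  simp only [RCLike.im_to_complex] at h2
  have key : (∫ x : ℝ, Real.sin (t * x) * Real.exp (-a * x ^ 2)) =
      (∫ x : ℝ, Complex.exp (Complex.I * (t:ℂ) * (x:ℂ)) * Complex.exp (-(a:ℂ) * (x:ℂ) ^ 2)).im := by
    rw [← h2]
    congr 1; ext x
    rw [show (Complex.I * (t:ℂ) * (x:ℂ)) = ((t*x : ℝ):ℂ) * Complex.I by push_cast; ring,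
      show (-(a:ℂ) * (x:ℂ)^2) = ((-a*x^2 : ℝ):ℂ) by push_cast; ring, ← Complex.ofReal_exp]
    simp only [Complex.mul_im, Complex.exp_ofReal_mul_I_re, Complex.exp_ofReal_mul_I_im,
      Complex.ofReal_re, Complex.ofReal_im, mul_zero, zero_mul, add_zero, zero_add]
  rw [key, gabor_fourier_gauss a t ha, Complex.ofReal_im]

end GaborAux

/-- The Gabor filter centered at the origin with orientation `θ = 0`:
`ψ₀(u,v) = exp(2πiu/λ)·exp(−(u²+v²)/(2σ²))`. -/
noncomputable def gabor0 (l σ : ℝ) (w : ℝ × ℝ) : ℂ :=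
  Complex.exp (2 * (Real.pi : ℂ) * Complex.I * (w.1 : ℂ) / (l : ℂ)) *
    Complex.exp (-(((w.1 : ℂ) ^ 2 + (w.2 : ℂ) ^ 2) / (2 * (σ : ℂ) ^ 2)))

lemma gabor0_re (l σ : ℝ) (w : ℝ × ℝ) :
    (gabor0 l σ w).re =
      Real.cos (2 * Real.pi / l * w.1) * Real.exp (-((w.1 ^ 2 + w.2 ^ 2) / (2 * σ ^ 2))) := by
  rw [gabor0,
    show (2 * (Real.pi : ℂ) * Complex.I * (w.1 : ℂ) / (l : ℂ))
        = ((2*Real.pi/l*w.1 : ℝ):ℂ) * Complex.I by push_cast; ring,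
    show (-(((w.1:ℂ)^2 + (w.2:ℂ)^2) / (2 * (σ:ℂ)^2)))
        = ((-((w.1^2+w.2^2)/(2*σ^2)) : ℝ):ℂ) by push_cast; ring,
    ← Complex.ofReal_exp]
  simp only [Complex.mul_re, Complex.exp_ofReal_mul_I_re, Complex.exp_ofReal_mul_I_im,
    Complex.ofReal_re, Complex.ofReal_im, mul_zero, sub_zero]

lemma gabor0_im (l σ : ℝ) (w : ℝ × ℝ) :
    (gabor0 l σ w).im =
      Real.sin (2 * Real.pi / l * w.1) * Real.exp (-((w.1 ^ 2 + w.2 ^ 2) / (2 * σ ^ 2))) := by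
  rw [gabor0,
    show (2 * (Real.pi : ℂ) * Complex.I * (w.1 : ℂ) / (l : ℂ))
        = ((2*Real.pi/l*w.1 : ℝ):ℂ) * Complex.I by push_cast; ring,
    show (-(((w.1:ℂ)^2 + (w.2:ℂ)^2) / (2 * (σ:ℂ)^2)))
        = ((-((w.1^2+w.2^2)/(2*σ^2)) : ℝ):ℂ) by push_cast; ring,
    ← Complex.ofReal_exp]
  simp only [Complex.mul_im, Complex.exp_ofReal_mul_I_re, Complex.exp_ofReal_mul_I_im,
    Complex.ofReal_re, Complex.ofReal_im, mul_zero, zero_mul, add_zero, zero_add]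

/-- The real and imaginary parts of `ψ₀` form a quadrature pair:
(i) they are `L²`-orthogonal; (ii) `‖Re ψ₀‖² = (πσ²/2)(1 + e^{−4π²σ²/λ²})`;
(iii) `‖Im ψ₀‖² = (πσ²/2)(1 − e^{−4π²σ²/λ²})`; in particular
`‖Re ψ₀‖² + ‖Im ψ₀‖² = πσ²` (the energy model). -/
theorem gabor_quadrature_pair (l σ : ℝ) (hl : 0 < l) (hσ : 0 < σ) :
    (∫ w : ℝ × ℝ, (gabor0 l σ w).re * (gabor0 l σ w).im) = 0 ∧
      (∫ w : ℝ × ℝ, (gabor0 l σ w).re ^ 2) =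
        Real.pi * σ ^ 2 / 2 * (1 + Real.exp (-(4 * Real.pi ^ 2 * σ ^ 2) / l ^ 2)) ∧
      (∫ w : ℝ × ℝ, (gabor0 l σ w).im ^ 2) =
        Real.pi * σ ^ 2 / 2 * (1 - Real.exp (-(4 * Real.pi ^ 2 * σ ^ 2) / l ^ 2)) ∧
      (∫ w : ℝ × ℝ, (gabor0 l σ w).re ^ 2) + (∫ w : ℝ × ℝ, (gabor0 l σ w).im ^ 2) =
        Real.pi * σ ^ 2 := by
  have hσ' : σ ≠ 0 := hσ.ne'
  have hl' : l ≠ 0 := hl.ne'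
  set a : ℝ := 1 / σ ^ 2 with ha_def
  have ha : 0 < a := by positivity
  set t : ℝ := 2 * Real.pi / l with ht_def
  have hprod : ∀ F G : ℝ → ℝ, (∫ w : ℝ × ℝ, F w.1 * G w.2) = (∫ x, F x) * ∫ y, G y := by
    intro F G
    rw [MeasureTheory.Measure.volume_eq_prod]
    exact integral_prod_mul F G
  have hG : (∫ x : ℝ, Real.exp (-a * x ^ 2)) = Real.sqrt (Real.pi / a) := integral_gaussian a
  have hGi : Integrable fun x : ℝ ↦ Real.exp (-a * x ^ 2) := integrable_exp_neg_mul_sq ha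
  have hCGi : Integrable fun x : ℝ ↦ Real.cos (2 * t * x) * Real.exp (-a * x ^ 2) := by
    refine hGi.bdd_mul (c := 1) ?_ (Filter.Eventually.of_forall fun x ↦ by simpa using Real.abs_cos_le_one (2 * t * x))
    exact (Real.continuous_cos.comp (continuous_const.mul continuous_id)).aestronglyMeasurable
  have hE : Real.exp (-(2*t) ^ 2 / (4 * a)) = Real.exp (-(4 * Real.pi ^ 2 * σ ^ 2) / l ^ 2) := by
    congr 1
    rw [ht_def, ha_def]
    field_simp
    ring
  have hsq : Real.sqrt (Real.pi / a) * Real.sqrt (Real.pi / a) = Real.pi * σ ^ 2 := by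
    rw [Real.mul_self_sqrt (by positivity), ha_def]
    field_simp
  have hcos2 : (∫ x : ℝ, Real.cos (t * x) ^ 2 * Real.exp (-a * x ^ 2)) =
      Real.sqrt (Real.pi / a) / 2 * (1 + Real.exp (-(2*t) ^ 2 / (4 * a))) := by
    have heq : ∀ x : ℝ, Real.cos (t * x) ^ 2 * Real.exp (-a * x ^ 2) =
        (1/2) * Real.exp (-a * x ^ 2) + (1/2) * (Real.cos (2 * t * x) * Real.exp (-a * x ^ 2)) := by
      intro x
      have hc := Real.cos_sq (t * x)
      rw [show 2 * (t * x) = 2 * t * x by ring] at hc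
      rw [hc]; ring
    rw [integral_congr_ae (Filter.Eventually.of_forall heq),
      integral_add (hGi.const_mul _) (hCGi.const_mul _), integral_const_mul, integral_const_mul,
      hG, gabor_cos_gauss a (2 * t) ha]
    ring
  have hsin2 : (∫ x : ℝ, Real.sin (t * x) ^ 2 * Real.exp (-a * x ^ 2)) =
      Real.sqrt (Real.pi / a) / 2 * (1 - Real.exp (-(2*t) ^ 2 / (4 * a))) := by
    have heq : ∀ x : ℝ, Real.sin (t * x) ^ 2 * Real.exp (-a * x ^ 2) =
        (1/2) * Real.exp (-a * x ^ 2) - (1/2) * (Real.cos (2 * t * x) * Real.exp (-a * x ^ 2)) := by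
      intro x
      have hc := Real.cos_sq (t * x)
      rw [show 2 * (t * x) = 2 * t * x by ring] at hc
      have hs : Real.sin (t * x) ^ 2 = 1 - Real.cos (t * x) ^ 2 := Real.sin_sq (t * x)
      rw [hs, hc]; ring
    rw [integral_congr_ae (Filter.Eventually.of_forall heq),
      integral_sub (hGi.const_mul _) (hCGi.const_mul _), integral_const_mul, integral_const_mul,
      hG, gabor_cos_gauss a (2 * t) ha]
    ring
  have hcs : (∫ x : ℝ, Real.cos (t * x) * Real.sin (t * x) * Real.exp (-a * x ^ 2)) = 0 := by
    have heq : ∀ x : ℝ, Real.cos (t * x) * Real.sin (t * x) * Real.exp (-a * x ^ 2) =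
        (1/2) * (Real.sin (2 * t * x) * Real.exp (-a * x ^ 2)) := by
      intro x
      have hs := Real.sin_two_mul (t * x)
      rw [show 2 * (t * x) = 2 * t * x by ring] at hs
      rw [hs]; ring
    rw [integral_congr_ae (Filter.Eventually.of_forall heq), integral_const_mul,
      gabor_sin_gauss a (2 * t) ha, mul_zero]
  have hexp2 : ∀ w : ℝ × ℝ, Real.exp (-((w.1 ^ 2 + w.2 ^ 2) / (2 * σ ^ 2))) ^ 2
      = Real.exp (-a * w.1 ^ 2) * Real.exp (-a * w.2 ^ 2) := by
    intro w
    rw [sq, ← Real.exp_add, ← Real.exp_add]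
    congr 1
    rw [ha_def]
    field_simp
    ring
  have h2 : (∫ w : ℝ × ℝ, (gabor0 l σ w).re ^ 2) =
      Real.pi * σ ^ 2 / 2 * (1 + Real.exp (-(4 * Real.pi ^ 2 * σ ^ 2) / l ^ 2)) := by
    have heq : (∫ w : ℝ × ℝ, (gabor0 l σ w).re ^ 2) =
        ∫ w : ℝ × ℝ, (Real.cos (t * w.1) ^ 2 * Real.exp (-a * w.1 ^ 2)) *
          Real.exp (-a * w.2 ^ 2) := by
      congr 1; ext w
      rw [gabor0_re l σ w, mul_pow, hexp2 w, ← ht_def]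
      ring
    rw [heq, hprod (fun x ↦ Real.cos (t*x)^2 * Real.exp (-a*x^2)) (fun y ↦ Real.exp (-a*y^2)), hcos2, hG, hE,
      show Real.sqrt (Real.pi/a)/2 * (1 + Real.exp (-(4*Real.pi^2*σ^2)/l^2)) * Real.sqrt (Real.pi/a)
        = Real.sqrt (Real.pi/a) * Real.sqrt (Real.pi/a) / 2 *
          (1 + Real.exp (-(4*Real.pi^2*σ^2)/l^2)) by ring, hsq]
  have h3 : (∫ w : ℝ × ℝ, (gabor0 l σ w).im ^ 2) =
      Real.pi * σ ^ 2 / 2 * (1 - Real.exp (-(4 * Real.pi ^ 2 * σ ^ 2) / l ^ 2)) := by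
    have heq : (∫ w : ℝ × ℝ, (gabor0 l σ w).im ^ 2) =
        ∫ w : ℝ × ℝ, (Real.sin (t * w.1) ^ 2 * Real.exp (-a * w.1 ^ 2)) *
          Real.exp (-a * w.2 ^ 2) := by
      congr 1; ext w
      rw [gabor0_im l σ w, mul_pow, hexp2 w, ← ht_def]
      ring
    rw [heq, hprod (fun x ↦ Real.sin (t*x)^2 * Real.exp (-a*x^2)) (fun y ↦ Real.exp (-a*y^2)), hsin2, hG, hE,
      show Real.sqrt (Real.pi/a)/2 * (1 - Real.exp (-(4*Real.pi^2*σ^2)/l^2)) * Real.sqrt (Real.pi/a)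
        = Real.sqrt (Real.pi/a) * Real.sqrt (Real.pi/a) / 2 *
          (1 - Real.exp (-(4*Real.pi^2*σ^2)/l^2)) by ring, hsq]
  refine ⟨?_, h2, h3, by rw [h2, h3]; ring⟩
  have heq : (∫ w : ℝ × ℝ, (gabor0 l σ w).re * (gabor0 l σ w).im) =
      ∫ w : ℝ × ℝ, (Real.cos (t * w.1) * Real.sin (t * w.1) * Real.exp (-a * w.1 ^ 2)) *
        Real.exp (-a * w.2 ^ 2) := by
    congr 1; ext w
    rw [gabor0_re l σ w, gabor0_im l σ w,
      show Real.cos (2*Real.pi/l*w.1) * Real.exp (-((w.1^2+w.2^2)/(2*σ^2))) *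
          (Real.sin (2*Real.pi/l*w.1) * Real.exp (-((w.1^2+w.2^2)/(2*σ^2))))
        = Real.cos (2*Real.pi/l*w.1) * Real.sin (2*Real.pi/l*w.1) *
          Real.exp (-((w.1^2+w.2^2)/(2*σ^2))) ^ 2 by ring, hexp2 w, ← ht_def]
    ring
  rw [heq, hprod (fun x ↦ Real.cos (t*x) * Real.sin (t*x) * Real.exp (-a*x^2)) (fun y ↦ Real.exp (-a*y^2)), hcs, zero_mul]
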